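/- Let K be an invertible real 2s×2s matrix and J_B a complex structure on (ℝ^{2s}, Δ). Then J = K J_B K⁻¹ is a complex structure on (ℝ^{2s}, Δ) if and only if the matrix (KᵀΔKΔ⁻¹)(ΔJ_B) is symmetric and positive semidefinite, i.e., (KᵀΔKΔ⁻¹)ΔJ_B = −J_BᵀΔ(KᵀΔKΔ⁻¹)ᵀ ≥ 0. (Note that J² = −I holds automatically.) -/
import Mathlib

open Matrix

noncomputable def Sympl (s : ℕ) : Matrix (Fin 2 × Fin s) (Fin 2 × Fin s) ℝ :=
  Matrix.blockDiagonal (fun _ => !![0, 1; -1, 0])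

def IsComplexStructure {s : ℕ} (J : Matrix (Fin 2 × Fin s) (Fin 2 × Fin s) ℝ) : Prop :=
  J * J = -1 ∧ Sympl s * J = -(Jᵀ * Sympl s) ∧ (Sympl s * J).PosSemidef

lemma small_sq : (!![0, 1; -1, 0] : Matrix (Fin 2) (Fin 2) ℝ) * !![0, 1; -1, 0] = -1 := by
  ext i j
  fin_cases i <;> fin_cases j <;>
    simp [Matrix.mul_apply, Fin.sum_univ_two, Matrix.one_apply]

lemma small_tr : (!![0, 1; -1, 0] : Matrix (Fin 2) (Fin 2) ℝ)ᵀ = -(!![0, 1; -1, 0]) := by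
  ext i j
  fin_cases i <;> fin_cases j <;> simp

lemma sympl_mul_sympl (s : ℕ) : Sympl s * Sympl s = -1 := by
  rw [Sympl, ← blockDiagonal_mul]
  simp only [small_sq]
  rw [← blockDiagonal_one, ← blockDiagonal_neg]; rfl

lemma sympl_transpose (s : ℕ) : (Sympl s)ᵀ = -(Sympl s) := by
  rw [Sympl, blockDiagonal_transpose]
  simp only [small_tr]
  rw [← blockDiagonal_neg]; rfl

lemma sympl_inv (s : ℕ) : (Sympl s)⁻¹ = -(Sympl s) := by
  apply inv_eq_right_inv
  rw [mul_neg, sympl_mul_sympl, neg_neg]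

/-- Let `K` be invertible and `J_B` a complex structure on
`(ℝ^{2s}, Δ)`.  Then `J = K J_B K⁻¹` is a complex structure iff the matrix
`(KᵀΔKΔ⁻¹)(ΔJ_B)` is symmetric, i.e. `(KᵀΔKΔ⁻¹)ΔJ_B = -J_BᵀΔ(KᵀΔKΔ⁻¹)ᵀ`, and
positive semidefinite.  (The relation `J² = -I` holds automatically.) -/
theorem conj_complexStructure_iff (s : ℕ)
    (K J_B : Matrix (Fin 2 × Fin s) (Fin 2 × Fin s) ℝ)
    (hK : IsUnit K.det) (hJB : IsComplexStructure J_B) :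
    IsComplexStructure (K * J_B * K⁻¹) ↔
      ((Kᵀ * Sympl s * K * (Sympl s)⁻¹) * (Sympl s * J_B) =
          -(J_Bᵀ * Sympl s * (Kᵀ * Sympl s * K * (Sympl s)⁻¹)ᵀ) ∧
        ((Kᵀ * Sympl s * K * (Sympl s)⁻¹) * (Sympl s * J_B)).PosSemidef) := by
  have hKK : K⁻¹ * K = 1 := nonsing_inv_mul K hK
  have hKK' : K * K⁻¹ = 1 := mul_nonsing_inv K hK
  set Δ := Sympl s with hΔ
  have hΔ2 : Δ * Δ = -1 := sympl_mul_sympl s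
  set J := K * J_B * K⁻¹ with hJ
  set X := Kᵀ * Δ * K * Δ⁻¹ with hX
  -- key identity: X * (Δ * J_B) = Kᵀ * (Δ * J) * K
  have hM : X * (Δ * J_B) = Kᵀ * (Δ * J) * K := by
    rw [hX, hJ, hΔ, sympl_inv, ← hΔ]
    calc Kᵀ * Δ * K * -Δ * (Δ * J_B)
        = Kᵀ * (Δ * K) * -(Δ * Δ) * J_B := by noncomm_ring
      _ = Kᵀ * (Δ * K) * J_B := by rw [hΔ2, neg_neg, Matrix.mul_one]
      _ = Kᵀ * (Δ * (K * J_B * (K⁻¹ * K))) := by rw [hKK, Matrix.mul_one]; noncomm_ring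
      _ = Kᵀ * (Δ * (K * J_B * K⁻¹)) * K := by noncomm_ring
  have hMT : (X * (Δ * J_B))ᵀ = -(J_Bᵀ * Δ * Xᵀ) := by
    rw [Matrix.transpose_mul, Matrix.transpose_mul, hΔ, sympl_transpose, ← hΔ]
    noncomm_ring
  have hsym : ∀ A : Matrix (Fin 2 × Fin s) (Fin 2 × Fin s) ℝ,
      ((Δ * A)ᵀ = Δ * A ↔ Δ * A = -(Aᵀ * Δ)) := by
    intro A
    rw [Matrix.transpose_mul, hΔ, sympl_transpose, ← hΔ, Matrix.mul_neg, eq_comm]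
  have hct : ∀ A : Matrix (Fin 2 × Fin s) (Fin 2 × Fin s) ℝ, Aᴴ = Aᵀ :=
    fun A => conjTranspose_eq_transpose_of_trivial A
  constructor
  · rintro ⟨-, -, hpsd⟩
    have hMpsd : (X * (Δ * J_B)).PosSemidef := by
      rw [hM]
      have := hpsd.conjTranspose_mul_mul_same K
      rwa [hct] at this
    refine ⟨?_, hMpsd⟩
    rw [← hMT]
    have := hMpsd.isHermitian
    rw [IsHermitian, hct] at this
    exact this.symm
  · rintro ⟨-, hpsd⟩
    have hDJ : (Δ * J).PosSemidef := by
      have := hpsd.conjTranspose_mul_mul_same K⁻¹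
      rw [hct, hM] at this
      have e : (K⁻¹)ᵀ * (Kᵀ * (Δ * J) * K) * K⁻¹ = Δ * J := by
        calc (K⁻¹)ᵀ * (Kᵀ * (Δ * J) * K) * K⁻¹
            = (K * K⁻¹)ᵀ * (Δ * J) * (K * K⁻¹) := by
              rw [Matrix.transpose_mul]; noncomm_ring
          _ = Δ * J := by rw [hKK', Matrix.transpose_one, Matrix.one_mul, Matrix.mul_one]
      rwa [e] at this
    refine ⟨?_, ?_, hDJ⟩
    · rw [hJ]
      calc K * J_B * K⁻¹ * (K * J_B * K⁻¹)
          = K * (J_B * (K⁻¹ * K) * J_B) * K⁻¹ := by noncomm_ring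
        _ = K * (J_B * J_B) * K⁻¹ := by rw [hKK, Matrix.mul_one]
        _ = -1 := by rw [hJB.1, Matrix.mul_neg, Matrix.mul_one, Matrix.neg_mul, hKK']
    · rw [← hsym]
      have := hDJ.isHermitian
      rwa [IsHermitian, hct] at this
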